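/- Let μ be a finite measure and f ∈ L²(μ). Then both pairs (𝟙_{f ≥ 0}, f) and (𝟙_{f > 0}, f) are admissible: for the first take φ_k = f and ε_k = 1/k; for the second take φ_k = f − 1/k and ε_k = 1/k². Moreover, if μ({f = 0}) > 0, then 𝟙_{f ≥ 0} ≠ 𝟙_{f > 0} as elements of L¹(μ); hence the first component z of an admissible pair (z, φ) is in general not uniquely determined by φ. -/

import Mathlib

open MeasureTheory Filter Topology

noncomputable section

/-- The smoothed level set projection `P_ε`. -/
def Pe (ε t : ℝ) : ℝ := max 0 (min 1 (1 + t / ε))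

/-- The level set projection `P` (Heaviside function, `P t = 1` iff `0 ≤ t`). -/
def Pstep (t : ℝ) : ℝ := if 0 ≤ t then 1 else 0

lemma Pe_continuous (ε : ℝ) : Continuous (Pe ε) :=
  continuous_const.max (continuous_const.min (continuous_const.add (continuous_id.div_const ε)))

lemma Pe_bound (ε t : ℝ) : ‖Pe ε t‖ ≤ 1 := by
  unfold Pe
  rw [Real.norm_eq_abs, abs_le]
  refine ⟨by linarith [le_max_left (0:ℝ) (min 1 (1 + t / ε))], ?_⟩
  exact max_le (by norm_num) (min_le_left _ _)

lemma Pstep_measurable : Measurable Pstep :=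
  Measurable.ite measurableSet_Ici measurable_const measurable_const

lemma Pstep_bound (t : ℝ) : ‖Pstep t‖ ≤ 1 := by
  unfold Pstep; split <;> simp

variable {X : Type*} [MeasurableSpace X] (μ : Measure X) [IsFiniteMeasure μ]

/-- Composition `P_ε ∘ f` of the smoothed projection with an `L²` function, as an
element of `L¹` (the measure being finite). -/
def compPe (ε : ℝ) (f : Lp ℝ 2 μ) : Lp ℝ 1 μ :=
  (MemLp.of_bound ((Pe_continuous ε).comp_aestronglyMeasurable (Lp.aestronglyMeasurable f)) 1
    (Eventually.of_forall fun x => Pe_bound ε (f x))).toLp _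

/-- Composition `P ∘ f` of the discontinuous projection with an `L²` function, as an
element of `L¹`. -/
def compP (f : Lp ℝ 2 μ) : Lp ℝ 1 μ :=
  (MemLp.of_bound
    (Pstep_measurable.comp_aemeasurable (Lp.aestronglyMeasurable f).aemeasurable).aestronglyMeasurable 1
    (Eventually.of_forall fun x => Pstep_bound (f x))).toLp _

/-- A pair `(z, φ) ∈ L¹ × L²` is admissible if `z` is the `L¹` limit of `P_{ε_k} ∘ φ_k`
for some positive `ε_k → 0` and some `φ_k → φ` in `L²`. -/
def Admissible (z : Lp ℝ 1 μ) (φ : Lp ℝ 2 μ) : Prop :=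
  ∃ (εs : ℕ → ℝ) (φs : ℕ → Lp ℝ 2 μ),
    (∀ k, 0 < εs k) ∧ Tendsto εs atTop (𝓝 0) ∧
    Tendsto φs atTop (𝓝 φ) ∧
    Tendsto (fun k => compPe μ (εs k) (φs k)) atTop (𝓝 z)

/-- The strict level set projection, `P_> t = 1` iff `0 < t`. -/
def Pstrict (t : ℝ) : ℝ := if 0 < t then 1 else 0

lemma Pstrict_measurable : Measurable Pstrict :=
  Measurable.ite measurableSet_Ioi measurable_const measurable_const

lemma Pstrict_bound (t : ℝ) : ‖Pstrict t‖ ≤ 1 := by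
  unfold Pstrict; split <;> simp

/-- Composition `P_> ∘ f`, i.e. the indicator of `{f > 0}`, as an element of `L¹`. -/
def compPgt (f : Lp ℝ 2 μ) : Lp ℝ 1 μ :=
  (MemLp.of_bound
    (Pstrict_measurable.comp_aemeasurable (Lp.aestronglyMeasurable f).aemeasurable).aestronglyMeasurable 1
    (Eventually.of_forall fun x => Pstrict_bound (f x))).toLp _

/-!
`P_ε` equals `1` on `[0, ∞)` and `0` on `(-∞, -ε]`, so `P_{ε_k} → 𝟙_{t ≥ 0}` pointwise as
`ε_k → 0`. Evaluating instead at `t - δ_k` with `ε_k ≤ δ_k → 0` pushes the ramp strictly to the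
left of `0` and gives the limit `𝟙_{t > 0}`; the two limits differ exactly at `t = 0`. All these
functions are bounded by `1` and `μ` is finite, so dominated convergence turns pointwise
convergence into `L¹` convergence.
-/

open scoped ENNReal

lemma Pe_eq_one_of_nonneg {ε t : ℝ} (hε : 0 < ε) (ht : 0 ≤ t) : Pe ε t = 1 := by
  have : 1 ≤ 1 + t / ε := le_add_of_nonneg_right (div_nonneg ht hε.le)
  simp only [Pe, min_eq_left this, max_eq_right zero_le_one]

lemma Pe_eq_zero_of_le_neg {ε t : ℝ} (hε : 0 < ε) (ht : t ≤ -ε) : Pe ε t = 0 := by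
  have : 1 + t / ε ≤ 0 := by
    rw [← le_neg_iff_add_nonpos_left, div_le_iff₀ hε]
    linarith
  simp only [Pe, max_eq_left ((min_le_right _ _).trans this)]

lemma tendsto_Pe_Pstep {ι : Type*} {l : Filter ι} {εs : ι → ℝ} (hpos : ∀ i, 0 < εs i)
    (hlim : Tendsto εs l (𝓝 0)) (t : ℝ) :
    Tendsto (fun i => Pe (εs i) t) l (𝓝 (Pstep t)) := by
  rcases le_or_gt 0 t with ht | ht
  · simp only [Pstep, if_pos ht, Pe_eq_one_of_nonneg (hpos _) ht, tendsto_const_nhds]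
  · rw [Pstep, if_neg ht.not_ge]
    refine tendsto_const_nhds.congr' ?_
    filter_upwards [hlim.eventually (gt_mem_nhds (neg_pos.mpr ht))] with i hi
    exact (Pe_eq_zero_of_le_neg (hpos i) (by linarith)).symm

lemma tendsto_Pe_sub_Pstrict {ι : Type*} {l : Filter ι} {εs δs : ι → ℝ}
    (hpos : ∀ i, 0 < εs i) (hle : ∀ i, εs i ≤ δs i) (hlim : Tendsto δs l (𝓝 0)) (t : ℝ) :
    Tendsto (fun i => Pe (εs i) (t - δs i)) l (𝓝 (Pstrict t)) := by
  rcases lt_or_ge 0 t with ht | ht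
  · rw [Pstrict, if_pos ht]
    refine tendsto_const_nhds.congr' ?_
    filter_upwards [hlim.eventually (gt_mem_nhds ht)] with i hi
    exact (Pe_eq_one_of_nonneg (hpos i) (by linarith)).symm
  · have hzero : ∀ i, Pe (εs i) (t - δs i) = 0 := fun i =>
      Pe_eq_zero_of_le_neg (hpos i) (by linarith [hle i])
    simp only [Pstrict, if_neg ht.not_gt, hzero, tendsto_const_nhds]

section LevelSetProjection

variable {μ}

lemma tendsto_L1_of_ae_tendsto_of_norm_le {E : Type*} [NormedAddCommGroup E]
    {F : ℕ → Lp E 1 μ} {G : Lp E 1 μ} (C : ℝ) (hbound : ∀ k, ∀ᵐ x ∂μ, ‖F k x‖ ≤ C)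
    (hlim : ∀ᵐ x ∂μ, Tendsto (fun k => F k x) atTop (𝓝 (G x))) :
    Tendsto F atTop (𝓝 G) := by
  rw [Lp.tendsto_Lp_iff_tendsto_eLpNorm']
  have := tendsto_lintegral_norm_of_dominated_convergence (fun k => Lp.aestronglyMeasurable (F k))
    (hasFiniteIntegral_const C) hbound hlim
  simpa only [eLpNorm_one_eq_lintegral_enorm, Pi.sub_apply, ofReal_norm] using this

lemma coeFn_compPe (ε : ℝ) (f : Lp ℝ 2 μ) : compPe μ ε f =ᵐ[μ] fun x => Pe ε (f x) :=
  MemLp.coeFn_toLp _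

lemma coeFn_compP (f : Lp ℝ 2 μ) : compP μ f =ᵐ[μ] fun x => Pstep (f x) :=
  MemLp.coeFn_toLp _

lemma coeFn_compPgt (f : Lp ℝ 2 μ) : compPgt μ f =ᵐ[μ] fun x => Pstrict (f x) :=
  MemLp.coeFn_toLp _

lemma norm_compPe_le (ε : ℝ) (f : Lp ℝ 2 μ) : ∀ᵐ x ∂μ, ‖compPe μ ε f x‖ ≤ 1 := by
  filter_upwards [coeFn_compPe ε f] with x hx
  rw [hx]
  exact Pe_bound ε (f x)

lemma tendsto_compPe_compP {εs : ℕ → ℝ} (hpos : ∀ k, 0 < εs k)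
    (hlim : Tendsto εs atTop (𝓝 0)) (f : Lp ℝ 2 μ) :
    Tendsto (fun k => compPe μ (εs k) f) atTop (𝓝 (compP μ f)) := by
  refine tendsto_L1_of_ae_tendsto_of_norm_le 1 (fun k => norm_compPe_le _ f) ?_
  filter_upwards [ae_all_iff.mpr fun k => coeFn_compPe (μ := μ) (εs k) f, coeFn_compP f]
    with x hPe hP
  simpa only [hPe, hP] using tendsto_Pe_Pstep hpos hlim (f x)

lemma tendsto_compPe_sub_const_compPgt {εs δs : ℕ → ℝ} (hpos : ∀ k, 0 < εs k)
    (hle : ∀ k, εs k ≤ δs k) (hlim : Tendsto δs atTop (𝓝 0)) (f : Lp ℝ 2 μ) :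
    Tendsto (fun k => compPe μ (εs k) (f - Lp.const 2 μ (δs k))) atTop (𝓝 (compPgt μ f)) := by
  refine tendsto_L1_of_ae_tendsto_of_norm_le 1 (fun k => norm_compPe_le _ _) ?_
  have hshift : ∀ k, ∀ᵐ x ∂μ,
      compPe μ (εs k) (f - Lp.const 2 μ (δs k)) x = Pe (εs k) (f x - δs k) := by
    intro k
    filter_upwards [coeFn_compPe (εs k) (f - Lp.const 2 μ (δs k)),
      Lp.coeFn_sub f (Lp.const 2 μ (δs k)), Lp.coeFn_const 2 μ (δs k)] with x hPe hsub hconst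
    rw [hPe, hsub, Pi.sub_apply, hconst, Function.const_apply]
  filter_upwards [ae_all_iff.mpr hshift, coeFn_compPgt f] with x hPe hP
  simpa only [hPe, hP] using tendsto_Pe_sub_Pstrict hpos hle hlim (f x)

lemma tendsto_sub_Lp_const {p : ℝ≥0∞} [Fact (1 ≤ p)] {E : Type*} [NormedAddCommGroup E]
    [NormedSpace ℝ E] {ι : Type*} {l : Filter ι} {cs : ι → E} (hlim : Tendsto cs l (𝓝 0))
    (f : Lp E p μ) : Tendsto (fun i => f - Lp.const p μ (cs i)) l (𝓝 f) := by
  have hconst : Tendsto (fun i => Lp.const p μ (cs i)) l (𝓝 0) :=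
    ((Lp.constL p μ ℝ).continuous.tendsto' 0 0 (map_zero _)).comp hlim
  simpa using tendsto_const_nhds.sub hconst

lemma compP_ne_compPgt {f : Lp ℝ 2 μ} (hzero : 0 < μ {x | f x = 0}) :
    compP μ f ≠ compPgt μ f := by
  intro heq
  have hae : ∀ᵐ x ∂μ, Pstep (f x) = Pstrict (f x) := by
    filter_upwards [coeFn_compP f, coeFn_compPgt f] with x hP hPgt
    rw [← hP, ← hPgt, heq]
  refine hzero.ne' (measure_mono_null (fun x hx => ?_) (ae_iff.mp hae))
  simp [show f x = 0 from hx, Pstep, Pstrict]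

end LevelSetProjection

/-- Remark 2.5: for `f ∈ L²(μ)` both pairs `(𝟙_{f ≥ 0}, f)` and `(𝟙_{f > 0}, f)` are
admissible — for the first take `φ_k = f`, `ε_k = 1/k`, for the second
`φ_k = f − 1/k`, `ε_k = 1/k²` (indexed with `k ≥ 1`) — and if `μ({f = 0}) > 0`
then `𝟙_{f ≥ 0} ≠ 𝟙_{f > 0}` in `L¹(μ)`; hence `z` is not uniquely determined by
`φ` in an admissible pair `(z, φ)`. -/
theorem admissible_pair_not_unique
    {X : Type*} [MeasurableSpace X] (μ : Measure X) [IsFiniteMeasure μ]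
    (f : Lp ℝ 2 μ) :
    Tendsto (fun k : ℕ => compPe μ (((k : ℝ) + 1)⁻¹) f) atTop (𝓝 (compP μ f)) ∧
    Tendsto (fun k : ℕ => compPe μ ((((k : ℝ) + 1) ^ 2)⁻¹)
        (f - (memLp_const (((k : ℝ) + 1)⁻¹)).toLp _)) atTop (𝓝 (compPgt μ f)) ∧
    Admissible μ (compP μ f) f ∧
    Admissible μ (compPgt μ f) f ∧
    (0 < μ {x | f x = 0} → compP μ f ≠ compPgt μ f) := by
  have hδpos : ∀ k : ℕ, 0 < ((k : ℝ) + 1)⁻¹ := fun k => by positivity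
  have hδlim : Tendsto (fun k : ℕ => ((k : ℝ) + 1)⁻¹) atTop (𝓝 0) := by
    simpa only [one_div] using tendsto_one_div_add_atTop_nhds_zero_nat (𝕜 := ℝ)
  have hεlim : Tendsto (fun k : ℕ => (((k : ℝ) + 1) ^ 2)⁻¹) atTop (𝓝 0) := by
    simpa [inv_pow] using hδlim.pow 2
  have hεδ : ∀ k : ℕ, (((k : ℝ) + 1) ^ 2)⁻¹ ≤ ((k : ℝ) + 1)⁻¹ := fun k =>
    inv_anti₀ (by positivity) (le_self_pow₀ (by simp) two_ne_zero)
  have hfirst := tendsto_compPe_compP hδpos hδlim f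
  have hsecond := tendsto_compPe_sub_const_compPgt (fun k => by positivity) hεδ hδlim f
  exact ⟨hfirst, hsecond, ⟨_, _, hδpos, hδlim, tendsto_const_nhds, hfirst⟩,
    ⟨_, _, fun k => by positivity, hεlim, tendsto_sub_Lp_const hδlim f, hsecond⟩,
    compP_ne_compPgt⟩
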